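/- arXiv:2208.09497 — 2 statements merged into one kernel-verified Lean document; each statement's English description precedes it below -/
import Mathlib

section
/- Let G = S₄ be the symmetric group on {1,2,3,4}, and let H_K = {σ ∈ G : σ(4) = 4}, H_{K₃} = the stabilizer in G of the partition {{1,2},{3,4}} (a dihedral group of order 8), and H_F = {id, (1 2), (3 4), (1 2)(3 4)}. Then for every finite-dimensional complex representation V of G, dim_ℂ V^{H_K} + dim_ℂ V^{H_{K₃}} = dim_ℂ V^{H_F} + dim_ℂ V^{G}, where V^{H} denotes the subspace of vectors fixed by all elements of the subgroup H. -/
/-!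
Averaging the character gives `|H| · dim V^H = ∑_{h ∈ H} χ_V(h)`, and `χ_V` is a class function.
Multiplying the claim by 24, it therefore suffices that `H_K` taken 4 times and `H_{K₃}` taken
3 times meet every conjugacy class of `S₄` as often as `H_F` taken 6 times together with `S₄`
itself, which is a finite check.
-/

open Pointwise

/-- The point stabilizer `{σ ∈ S₄ : σ 4 = 4}` of the last point, isomorphic to `S₃`. -/
def HK : Subgroup (Equiv.Perm (Fin 4)) :=
  MulAction.stabilizer (Equiv.Perm (Fin 4)) (3 : Fin 4)

/-- The stabilizer in `S₄` of the partition `{{1,2},{3,4}}`, a dihedral group of order 8. -/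
def HK3 : Subgroup (Equiv.Perm (Fin 4)) :=
  MulAction.stabilizer (Equiv.Perm (Fin 4)) ({{0, 1}, {2, 3}} : Set (Set (Fin 4)))

/-- The subgroup `{id, (1 2), (3 4), (1 2)(3 4)}` of `S₄`. -/
def HF : Subgroup (Equiv.Perm (Fin 4)) where
  carrier := {σ | σ = 1 ∨ σ = Equiv.swap 0 1 ∨ σ = Equiv.swap 2 3 ∨
    σ = Equiv.swap 0 1 * Equiv.swap 2 3}
  one_mem' := by decide
  mul_mem' := by decide
  inv_mem' := by decide

open Finset MulAction

theorem stabilizer_image_coe_finset {G α : Type*} [Group G] [MulAction G α] [DecidableEq α]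
    (F : Finset (Finset α)) :
    stabilizer G (((↑) : Finset α → Set α) '' F) = stabilizer G F := by
  ext g
  have hcoe : g • (((↑) : Finset α → Set α) '' F) = ((↑) : Finset α → Set α) '' ↑(g • F) := by
    simp only [← Set.image_smul, Set.image_image, Finset.coe_smul_finset]
  rw [mem_stabilizer_iff, mem_stabilizer_iff, hcoe,
    (Set.image_injective.mpr Finset.coe_injective).eq_iff, Finset.coe_inj]

theorem Multiset.sum_map_eq_of_map_conjClassesMk_eq {G R : Type*} [Monoid G] [AddCommMonoid R]
    {s t : Multiset G} (hst : s.map ConjClasses.mk = t.map ConjClasses.mk) {f : G → R}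
    (hf : ∀ a b, IsConj a b → f a = f b) : (s.map f).sum = (t.map f).sum := by
  have hfactor : f = (fun c : ConjClasses G ↦ Quotient.lift (s := IsConj.setoid G) f hf c) ∘
      ConjClasses.mk := rfl
  rw [hfactor, ← Multiset.map_map, hst, Multiset.map_map]

namespace Representation

variable {k G V : Type*} [Field k] [Group G] [AddCommGroup V] [Module k V]
  (ρ : Representation k G V)

theorem character_eq_of_isConj {a b : G} (hab : IsConj a b) : ρ.character a = ρ.character b := by
  obtain ⟨c, rfl⟩ := isConj_iff.mp hab
  exact (ρ.char_conj a c).symm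

variable [CharZero k] [Fintype G] [FiniteDimensional k V]

theorem card_mul_finrank_invariants :
    (Nat.card G : k) * Module.finrank k ρ.invariants = ∑ g, ρ.character g := by
  have hcard : (Nat.card G : k) ≠ 0 := Nat.cast_ne_zero.mpr Nat.card_pos.ne'
  have : Invertible (Nat.card G : k) := invertibleOfNonzero hcard
  rw [← card_inv_mul_sum_char_eq_finrank, mul_inv_cancel_left₀ hcard]

theorem card_mul_finrank_invariants_comp_subtype (H : Subgroup G) [DecidablePred (· ∈ H)] :
    (Nat.card H : k) * Module.finrank k (invariants (ρ.comp H.subtype))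
      = ∑ g ∈ univ.filter (· ∈ H), ρ.character g := by
  rw [card_mul_finrank_invariants, Finset.sum_subtype _ (fun x ↦ Finset.mem_filter_univ x)]
  rfl

end Representation

/-- `Set (Set (Fin 4))` has no decidable equality; the finset form makes membership in `HK3`
decidable. -/
theorem HK3_eq_stabilizer_finset :
    HK3 = stabilizer (Equiv.Perm (Fin 4)) ({{0, 1}, {2, 3}} : Finset (Finset (Fin 4))) := by
  rw [← stabilizer_image_coe_finset, HK3]
  simp only [Finset.coe_insert, Finset.coe_singleton, Set.image_insert_eq, Set.image_singleton]

instance : DecidablePred (· ∈ HK) := fun g ↦ decidable_of_iff (g 3 = 3) Iff.rfl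

instance : DecidablePred (· ∈ HK3) := fun g ↦
  decidable_of_iff (g • ({{0, 1}, {2, 3}} : Finset (Finset (Fin 4))) = {{0, 1}, {2, 3}})
    (by rw [HK3_eq_stabilizer_finset]; exact mem_stabilizer_iff.symm)

instance : DecidablePred (· ∈ HF) := fun g ↦
  decidable_of_iff (g = 1 ∨ g = Equiv.swap 0 1 ∨ g = Equiv.swap 2 3 ∨
    g = Equiv.swap 0 1 * Equiv.swap 2 3) Iff.rfl

theorem card_HK : Nat.card HK = 6 := by
  rw [Nat.card_eq_fintype_card, Fintype.card_subtype]; decide +kernel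

theorem card_HK3 : Nat.card HK3 = 8 := by
  rw [Nat.card_eq_fintype_card, Fintype.card_subtype]; decide +kernel

theorem card_HF : Nat.card HF = 4 := by
  rw [Nat.card_eq_fintype_card, Fintype.card_subtype]; decide +kernel

theorem map_conjClassesMk_HK_HK3_eq_HF_univ :
    (4 • (univ.filter (· ∈ HK)).val + 3 • (univ.filter (· ∈ HK3)).val).map ConjClasses.mk
      = (6 • (univ.filter (· ∈ HF)).val + univ.val).map ConjClasses.mk := by
  decide +kernel

theorem fixed_space_dim_identity_S4
    (V : Type) [AddCommGroup V] [Module ℂ V] [FiniteDimensional ℂ V]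
    (ρ : Representation ℂ (Equiv.Perm (Fin 4)) V) :
    Module.finrank ℂ (Representation.invariants (ρ.comp HK.subtype))
        + Module.finrank ℂ (Representation.invariants (ρ.comp HK3.subtype))
      = Module.finrank ℂ (Representation.invariants (ρ.comp HF.subtype)) + Module.finrank ℂ (Representation.invariants ρ) := by
  have hsum := Multiset.sum_map_eq_of_map_conjClassesMk_eq map_conjClassesMk_HK_HK3_eq_HF_univ
    (fun _ _ ↦ ρ.character_eq_of_isConj)
  simp only [Multiset.map_add, Multiset.map_nsmul, Multiset.sum_add, Multiset.sum_nsmul,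
    ← Finset.sum_eq_multiset_sum, ← ρ.card_mul_finrank_invariants_comp_subtype,
    ← ρ.card_mul_finrank_invariants, card_HK, card_HK3, card_HF, Nat.card_perm, Nat.card_fin,
    nsmul_eq_mul] at hsum
  apply Nat.cast_injective (R := ℂ)
  push_cast
  linear_combination hsum / 24
end

section
/- Let L be a number field, let A, B ∈ L with 4A³ + 27B² ≠ 0, and let E be the elliptic curve y² = x³ + Ax + B over L. Let d ∈ Lˣ be a non-square, F = L(√d) the corresponding quadratic extension, and E^d the quadratic twist of E by d, i.e. the elliptic curve y² = x³ + A d² x + B d³ over L. Then rk(E/F) = rk(E/L) + rk(E^d/L), i.e. dim_ℚ(E(F) ⊗_ℤ ℚ) = dim_ℚ(E(L) ⊗_ℤ ℚ) + dim_ℚ(E^d(L) ⊗_ℤ ℚ). -/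
/-!
Let `σ` be the nontrivial automorphism of `F/L`; it acts on `E(F)` as an involution. Up to
2-torsion, which dies after `⊗ ℚ`, `E(F)` is the sum of its `σ`-fixed and `σ`-negated subgroups:
`P ↦ (P + σP, P - σP)` and `(P₊, P₋) ↦ P₊ + P₋` compose to multiplication by 2 both ways.
By Galois descent the fixed subgroup is `E(L)`. Over `F` the scaling `(x, y) ↦ (x / s², y / s³)`
is an isomorphism `E^d ≅ E`, and since `σ s = -s` it maps `E^d(L)` onto the negated subgroup.
-/

open WeierstrassCurve WeierstrassCurve.Affine TensorProduct

namespace AddCommGroup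

universe u

variable {M N : Type u} [AddCommGroup M] [AddCommGroup N]

lemma rank_rat_tensor_congr (e : M ≃+ N) :
    Module.rank ℚ (ℚ ⊗[ℤ] M) = Module.rank ℚ (ℚ ⊗[ℤ] N) :=
  (e.toIntLinearEquiv.baseChange ℤ ℚ M N).rank_eq

lemma baseChange_comp_eq_nsmul {f : M →+ N} {g : N →+ M} {n : ℕ}
    (h : g.comp f = n • AddMonoidHom.id M) :
    g.toIntLinearMap.baseChange ℚ ∘ₗ f.toIntLinearMap.baseChange ℚ = (n : ℚ) • LinearMap.id := by
  ext x
  have hx : g (f x) = n • x := DFunLike.congr_fun h x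
  simp [hx, tmul_smul, Nat.cast_smul_eq_nsmul]

lemma rank_rat_tensor_eq_of_comp_eq_nsmul (f : M →+ N) (g : N →+ M) {n : ℕ} (hn : n ≠ 0)
    (hgf : g.comp f = n • AddMonoidHom.id M) (hfg : f.comp g = n • AddMonoidHom.id N) :
    Module.rank ℚ (ℚ ⊗[ℤ] M) = Module.rank ℚ (ℚ ⊗[ℤ] N) := by
  have hn' : (n : ℚ)⁻¹ * n = 1 := inv_mul_cancel₀ (Nat.cast_ne_zero.mpr hn)
  refine (LinearEquiv.ofLinearMap (f.toIntLinearMap.baseChange ℚ)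
    ((n : ℚ)⁻¹ • g.toIntLinearMap.baseChange ℚ) ?_ ?_).rank_eq
  · rw [LinearMap.comp_smul, baseChange_comp_eq_nsmul hfg, smul_smul, hn', one_smul]
  · rw [LinearMap.smul_comp, baseChange_comp_eq_nsmul hgf, smul_smul, hn', one_smul]

lemma rank_rat_tensor_prod :
    Module.rank ℚ (ℚ ⊗[ℤ] (M × N)) = Module.rank ℚ (ℚ ⊗[ℤ] M) + Module.rank ℚ (ℚ ⊗[ℤ] N) := by
  rw [(prodRight ℤ ℚ ℚ M N).rank_eq, rank_prod']

lemma rank_rat_tensor_eq_add_of_involutive (σ : M →+ M) (hσ : Function.Involutive σ) :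
    Module.rank ℚ (ℚ ⊗[ℤ] M) = Module.rank ℚ (ℚ ⊗[ℤ] σ.eqLocus (AddMonoidHom.id M))
      + Module.rank ℚ (ℚ ⊗[ℤ] σ.eqLocus (-AddMonoidHom.id M)) := by
  set Mfix := σ.eqLocus (AddMonoidHom.id M)
  set Mneg := σ.eqLocus (-AddMonoidHom.id M)
  have add_mem_fix (x : M) : x + σ x ∈ Mfix := by
    change σ (x + σ x) = x + σ x
    rw [map_add, hσ x, add_comm]
  have sub_mem_neg (x : M) : x - σ x ∈ Mneg := by
    change σ (x - σ x) = -(x - σ x)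
    rw [map_sub, hσ x, neg_sub]
  let split : M →+ Mfix × Mneg :=
    ((AddMonoidHom.id M + σ).codRestrict Mfix add_mem_fix).prod
      ((AddMonoidHom.id M - σ).codRestrict Mneg sub_mem_neg)
  rw [← rank_rat_tensor_prod]
  refine rank_rat_tensor_eq_of_comp_eq_nsmul split (Mfix.subtype.coprod Mneg.subtype) two_ne_zero
    ?_ ?_
  · ext x
    change (x + σ x) + (x - σ x) = 2 • x
    abel
  · refine AddMonoidHom.ext fun ⟨⟨a, ha⟩, ⟨b, hb⟩⟩ => Prod.ext (Subtype.ext ?_) (Subtype.ext ?_)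
    all_goals
      replace ha : σ a = a := ha
      replace hb : σ b = -b := hb
    · change (a + b) + σ (a + b) = 2 • a
      rw [map_add, ha, hb]
      abel
    · change (a + b) - σ (a + b) = 2 • b
      rw [map_add, ha, hb]
      abel

end AddCommGroup

lemma exists_conj_of_finrank_eq_two {L F : Type*} [Field L] [CharZero L] [Field F] [Algebra L F]
    (hF : Module.finrank L F = 2) {d : L} (hd : ¬IsSquare d) {s : F}
    (hs : s ^ 2 = algebraMap L F d) :
    ∃ σ : F ≃ₐ[L] F, σ s = -s ∧ Function.Involutive σ ∧
      ∀ z, σ z = z → z ∈ Set.range (algebraMap L F) := by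
  have : Algebra.IsQuadraticExtension L F := ⟨hF⟩
  have : FiniteDimensional L F := .of_finrank_eq_succ hF
  have hcard : Nat.card Gal(F/L) = 2 := (IsGalois.card_aut_eq_finrank L F).trans hF
  have hs_notMem : s ∉ Set.range (algebraMap L F) := by
    rintro ⟨a, rfl⟩
    exact hd ⟨a, (algebraMap L F).injective (by rw [map_mul, ← sq, hs])⟩
  obtain ⟨σ, hσs⟩ : ∃ σ : Gal(F/L), σ s ≠ s := by
    by_contra! h
    exact hs_notMem ((IsGalois.mem_range_algebraMap_iff_fixed s).mpr h)
  refine ⟨σ, ?_, fun z => ?_,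
    fun z hz => (IsGalois.mem_range_algebraMap_iff_fixed z).mpr fun f => ?_⟩
  · have hsq : σ s ^ 2 = s ^ 2 := by rw [← map_pow, hs, AlgEquiv.commutes]
    have : (σ s - s) * (σ s + s) = 0 := by linear_combination hsq
    exact eq_neg_of_add_eq_zero_left ((mul_eq_zero.mp this).resolve_left (sub_ne_zero.mpr hσs))
  · have hσσ : σ ^ 2 = 1 := hcard ▸ pow_card_eq_one'
    exact DFunLike.congr_fun hσσ z
  · obtain rfl | hf := eq_or_ne f 1
    · rfl
    obtain ⟨τ, -, hτ⟩ := (Nat.card_eq_two_iff' 1).mp hcard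
    rwa [hτ f hf, ← hτ σ (by rintro rfl; exact hσs rfl)]

namespace WeierstrassCurve

variable {K : Type*} [Field K] (W : WeierstrassCurve K) (u : Kˣ)

lemma variableChange_scaling : (⟨u, 0, 0, 0⟩ : VariableChange K) • W =
    ⟨↑u⁻¹ * W.a₁, ↑u⁻¹ ^ 2 * W.a₂, ↑u⁻¹ ^ 3 * W.a₃, ↑u⁻¹ ^ 4 * W.a₄, ↑u⁻¹ ^ 6 * W.a₆⟩ := by
  ext <;> simp [variableChange_def]

namespace Affine

lemma equation_scaling_iff (x y : K) :
    ((⟨u, 0, 0, 0⟩ : VariableChange K) • W).toAffine.Equation (↑u⁻¹ ^ 2 * x) (↑u⁻¹ ^ 3 * y) ↔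
      W.toAffine.Equation x y := by
  rw [variableChange_scaling, equation_iff', equation_iff']
  nth_rewrite 2 [← mul_eq_zero_iff_left (pow_ne_zero 6 u⁻¹.ne_zero)]
  ring_nf

lemma nonsingular_scaling_iff (x y : K) :
    ((⟨u, 0, 0, 0⟩ : VariableChange K) • W).toAffine.Nonsingular (↑u⁻¹ ^ 2 * x) (↑u⁻¹ ^ 3 * y) ↔
      W.toAffine.Nonsingular x y := by
  rw [nonsingular_iff', nonsingular_iff', equation_scaling_iff, variableChange_scaling]
  nth_rewrite 3 [← mul_ne_zero_iff_left (pow_ne_zero 4 u⁻¹.ne_zero)]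
  nth_rewrite 4 [← mul_ne_zero_iff_left (pow_ne_zero 3 u⁻¹.ne_zero)]
  ring_nf

lemma negY_scaling (x y : K) :
    ((⟨u, 0, 0, 0⟩ : VariableChange K) • W).toAffine.negY (↑u⁻¹ ^ 2 * x) (↑u⁻¹ ^ 3 * y) =
      ↑u⁻¹ ^ 3 * W.toAffine.negY x y := by
  rw [variableChange_scaling, negY, negY]
  ring

lemma addX_scaling (x₁ x₂ ℓ : K) :
    ((⟨u, 0, 0, 0⟩ : VariableChange K) • W).toAffine.addX (↑u⁻¹ ^ 2 * x₁) (↑u⁻¹ ^ 2 * x₂)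
      (↑u⁻¹ * ℓ) = ↑u⁻¹ ^ 2 * W.toAffine.addX x₁ x₂ ℓ := by
  rw [variableChange_scaling, addX, addX]
  ring

lemma addY_scaling (x₁ x₂ y₁ ℓ : K) :
    ((⟨u, 0, 0, 0⟩ : VariableChange K) • W).toAffine.addY (↑u⁻¹ ^ 2 * x₁) (↑u⁻¹ ^ 2 * x₂)
      (↑u⁻¹ ^ 3 * y₁) (↑u⁻¹ * ℓ) = ↑u⁻¹ ^ 3 * W.toAffine.addY x₁ x₂ y₁ ℓ := by
  rw [variableChange_scaling]
  simp only [addY, negAddY, addX, negY]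
  ring

lemma slope_scaling [DecidableEq K] (x₁ x₂ y₁ y₂ : K) :
    ((⟨u, 0, 0, 0⟩ : VariableChange K) • W).toAffine.slope (↑u⁻¹ ^ 2 * x₁) (↑u⁻¹ ^ 2 * x₂)
      (↑u⁻¹ ^ 3 * y₁) (↑u⁻¹ ^ 3 * y₂) = ↑u⁻¹ * W.toAffine.slope x₁ x₂ y₁ y₂ := by
  have hv := u⁻¹.ne_zero
  simp only [slope, negY_scaling, mul_right_inj' (pow_ne_zero _ hv)]
  split_ifs
  · rw [mul_zero]
  · rw [variableChange_scaling]
    field_simp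
  · field_simp

namespace Point

variable [DecidableEq K] {W u} {W' : WeierstrassCurve K}

-- Stated for any `W'` equal to the scaled curve, so that it applies to curves that are only
-- propositionally equal to it, such as base changes.
noncomputable def scaling (h : W' = (⟨u, 0, 0, 0⟩ : VariableChange K) • W) :
    W.toAffine.Point →+ W'.toAffine.Point := by
  subst h
  exact {
    toFun := fun
      | 0 => 0
      | some x y hP => some _ _ ((nonsingular_scaling_iff W u x y).mpr hP)
    map_zero' := rfl
    map_add' := by
      rintro (_ | ⟨x₁, y₁, h₁⟩) (_ | ⟨x₂, y₂, h₂⟩)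
      any_goals rfl
      by_cases hxy : x₁ = x₂ ∧ y₁ = W.toAffine.negY x₂ y₂
      · rw [add_of_Y_eq hxy.left hxy.right,
          add_of_Y_eq (congr_arg _ hxy.left) <| by rw [hxy.right, negY_scaling]]
      · have hv := u⁻¹.ne_zero
        simpa only [add_some hxy, ← addX_scaling, ← addY_scaling, ← slope_scaling] using
          (add_some fun h ↦ hxy ⟨mul_left_cancel₀ (pow_ne_zero 2 hv) h.1,
            mul_left_cancel₀ (pow_ne_zero 3 hv) ((negY_scaling W u x₂ y₂) ▸ h.2)⟩).symm }

lemma scaling_some (h : W' = (⟨u, 0, 0, 0⟩ : VariableChange K) • W) {x y : K}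
    (hP : W.toAffine.Nonsingular x y) :
    scaling h (some x y hP) =
      some (↑u⁻¹ ^ 2 * x) (↑u⁻¹ ^ 3 * y) (h ▸ (nonsingular_scaling_iff W u x y).mpr hP) := by
  subst h
  rfl

lemma scaling_injective (h : W' = (⟨u, 0, 0, 0⟩ : VariableChange K) • W) :
    Function.Injective (scaling h) := by
  refine (injective_iff_map_eq_zero _).mpr ?_
  rintro (_ | ⟨x, y, hP⟩) hP0
  · rfl
  · rw [scaling_some] at hP0
    exact (some_ne_zero _ hP0).elim

end Point

end Affine

end WeierstrassCurve

namespace WeierstrassCurve.Affine.Point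

variable {L F : Type*} [Field L] [Field F] [Algebra L F] [DecidableEq F]
  (E : WeierstrassCurve L) {σ : F ≃ₐ[L] F}

lemma map_involutive (hσ : Function.Involutive σ) :
    Function.Involutive (map (W' := E) (σ : F →ₐ[L] F)) := by
  rintro (_ | ⟨x, y, h⟩)
  · rfl
  · simp only [map_some, AlgEquiv.coe_toAlgHom, hσ x, hσ y]

variable [DecidableEq L]

lemma eqLocus_map_eq_range_baseChange
    (hσ : ∀ z, σ z = z → z ∈ Set.range (algebraMap L F)) :
    (map (W' := E) (σ : F →ₐ[L] F)).eqLocus (AddMonoidHom.id _) =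
      (baseChange (W' := E) L F).range := by
  ext P
  constructor
  · rcases P with _ | ⟨x, y, h⟩
    · exact fun _ => ⟨0, rfl⟩
    intro hP
    replace hP : map (σ : F →ₐ[L] F) (some x y h) = some x y h := hP
    rw [map_some, some.injEq] at hP
    obtain ⟨hx, hy⟩ := hP
    obtain ⟨a, rfl⟩ := hσ x hx
    obtain ⟨b, rfl⟩ := hσ y hy
    exact ⟨some _ _ ((baseChange_nonsingular E (f := Algebra.ofId L F)
      (algebraMap L F).injective a b).mp h), rfl⟩
  · rintro ⟨Q, rfl⟩
    exact map_baseChange _ Q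

lemma eqLocus_map_neg_eq_range_scaling_comp_baseChange {Ed : WeierstrassCurve L} {u : Fˣ}
    (hE₁ : E.a₁ = 0) (hE₃ : E.a₃ = 0) (hσu : σ u = -u)
    (hσ : ∀ z, σ z = z → z ∈ Set.range (algebraMap L F))
    (hEd : E.baseChange F = (⟨u, 0, 0, 0⟩ : VariableChange F) • Ed.baseChange F) :
    (map (W' := E) (σ : F →ₐ[L] F)).eqLocus (-AddMonoidHom.id _) =
      ((scaling hEd).comp (baseChange (W' := Ed) L F)).range := by
  have hneg (x y : F) : (E⁄F).negY x y = -y := by simp [negY, hE₁, hE₃]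
  ext P
  constructor
  · rcases P with _ | ⟨x, y, h⟩
    · exact fun _ => ⟨0, _root_.map_zero _⟩
    intro hP
    replace hP : map (σ : F →ₐ[L] F) (some x y h) = -some x y h := hP
    rw [map_some, neg_some, some.injEq, hneg, AlgEquiv.coe_toAlgHom] at hP
    obtain ⟨hx, hy⟩ := hP
    obtain ⟨a, ha⟩ := hσ (u ^ 2 * x) (by simp [hσu, hx])
    obtain ⟨b, hb⟩ := hσ (u ^ 3 * y) (by simp [hσu, hy]; ring)
    have hQ : (Ed⁄F).Nonsingular (algebraMap L F a) (algebraMap L F b) := by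
      rw [ha, hb, ← nonsingular_scaling_iff (Ed.baseChange F) u, ← hEd]
      simpa [← mul_assoc, ← mul_pow] using h
    refine ⟨some _ _ ((baseChange_nonsingular Ed (f := Algebra.ofId L F)
      (algebraMap L F).injective a b).mp hQ), ?_⟩
    rw [AddMonoidHom.comp_apply, map_some, scaling_some, some.injEq, Algebra.ofId_apply,
      Algebra.ofId_apply, ha, hb]
    simp
  · rintro ⟨Q, rfl⟩
    rcases Q with _ | ⟨a, b, h⟩
    · simp [← zero_def]
    change map _ (scaling hEd (map _ (some a b h))) = -scaling hEd (map _ (some a b h))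
    rw [map_some, scaling_some, map_some, neg_some, some.injEq, hneg]
    simp [hσu, Odd.neg_pow (by decide : Odd 3)]

end WeierstrassCurve.Affine.Point

open Classical in
theorem rank_of_quadratic_twist_general
    (L : Type) [Field L] [NumberField L] (A B : L)
    (E : WeierstrassCurve L) (hE : E = ⟨0, 0, 0, A, B⟩)
    (d : L) (hd0 : d ≠ 0) (hd : ¬ IsSquare d)
    (Ed : WeierstrassCurve L) (hEd : Ed = ⟨0, 0, 0, A * d ^ 2, B * d ^ 3⟩)
    (F : Type) [Field F] [Algebra L F] (hF2 : Module.finrank L F = 2)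
    (s : F) (hs : s ^ 2 = algebraMap L F d) :
    Module.rank ℚ (ℚ ⊗[ℤ] (E.baseChange F).toAffine.Point)
      = Module.rank ℚ (ℚ ⊗[ℤ] (E.baseChange L).toAffine.Point) + Module.rank ℚ (ℚ ⊗[ℤ] (Ed.baseChange L).toAffine.Point) := by
  obtain ⟨σ, hσs, hσ, hfix⟩ := exists_conj_of_finrank_eq_two hF2 hd hs
  have hs0 : s ≠ 0 := by
    rintro rfl
    exact hd0 (by simpa using hs.symm)
  have hEF : E.baseChange F = (⟨.mk0 s hs0, 0, 0, 0⟩ : VariableChange F) • Ed.baseChange F := by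
    rw [variableChange_scaling]
    subst hE hEd
    ext <;> simp [WeierstrassCurve.baseChange, ← hs] <;> field_simp
  rw [AddCommGroup.rank_rat_tensor_eq_add_of_involutive _ (Point.map_involutive E hσ),
    Point.eqLocus_map_eq_range_baseChange E hfix,
    Point.eqLocus_map_neg_eq_range_scaling_comp_baseChange E (by rw [hE]) (by rw [hE]) hσs hfix hEF,
    AddCommGroup.rank_rat_tensor_congr (AddMonoidHom.ofInjective (Point.map_injective _)).symm,
    AddCommGroup.rank_rat_tensor_congr (AddMonoidHom.ofInjective
      (f := (Point.scaling hEF).comp (Point.baseChange L F))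
      ((Point.scaling_injective hEF).comp (Point.map_injective _))).symm]

open Classical in
theorem rank_of_quadratic_twist
    (L : Type) [Field L] [NumberField L] (A B : L) (hAB : 4 * A ^ 3 + 27 * B ^ 2 ≠ 0)
    (E : WeierstrassCurve L) (hE : E = ⟨0, 0, 0, A, B⟩)
    (d : L) (hd0 : d ≠ 0) (hd : ¬ IsSquare d)
    (Ed : WeierstrassCurve L) (hEd : Ed = ⟨0, 0, 0, A * d ^ 2, B * d ^ 3⟩)
    (F : Type) [Field F] [Algebra L F] (hF2 : Module.finrank L F = 2)
    (s : F) (hs : s ^ 2 = algebraMap L F d) :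
    Module.rank ℚ (ℚ ⊗[ℤ] (E.baseChange F).toAffine.Point)
      = Module.rank ℚ (ℚ ⊗[ℤ] (E.baseChange L).toAffine.Point) + Module.rank ℚ (ℚ ⊗[ℤ] (Ed.baseChange L).toAffine.Point) :=
  rank_of_quadratic_twist_general L A B E hE d hd0 hd Ed hEd F hF2 s hs
end
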